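/- arXiv:2012.14189 — 2 statements merged into one kernel-verified Lean document; each statement's English description precedes it below -/
import Mathlib

section
/- Let α,β,γ > -1 be real and 0 ≤ k ≤ n integers. Then ∬_{T²} U_{k,n}^{α,β,γ}(u,v) · u^{k} v^{n-k} · W_{α,β,γ}(u,v) du dv = (-1)ⁿ · (α+1)_k (β+1)_{n-k} (γ+1)_n · k! (n-k)! / (α+β+γ+3)_{2n}. -/
open Real MeasureTheory

/-- The Pochhammer symbol `(a)_k = a(a+1)⋯(a+k-1) = Γ(a+k)/Γ(a)`. -/
noncomputable def poch (a : ℝ) (k : ℕ) : ℝ := ∏ i ∈ Finset.range k, (a + (i : ℝ))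

/-- Iterated partial derivative `∂^{k+l}/∂x^k ∂y^l` of a two-variable function. -/
noncomputable def pderiv2 (k l : ℕ) (f : ℝ → ℝ → ℝ) (x y : ℝ) : ℝ :=
  iteratedDeriv k (fun s => iteratedDeriv l (fun t => f s t) y) x

/-- Extended Beta function `B(x,y,z) = Γ(x)Γ(y)Γ(z)/Γ(x+y+z)`. -/
noncomputable def Beta3 (x y z : ℝ) : ℝ :=
  Real.Gamma x * Real.Gamma y * Real.Gamma z / Real.Gamma (x + y + z)

/-- The Appell polynomial `U_{k,n}^{α,β,γ}` given by the Rodrigues-type formula. -/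
noncomputable def Ukn (α β γ : ℝ) (k n : ℕ) (x y : ℝ) : ℝ :=
  (x ^ α * y ^ β * (1 - x - y) ^ γ)⁻¹ *
    pderiv2 k (n - k) (fun u v =>
      u ^ ((k : ℝ) + α) * v ^ ((n : ℝ) - (k : ℝ) + β) * (1 - u - v) ^ ((n : ℝ) + γ)) x y

/-- The normalized Jacobi weight on the triangle,
`W_{α,β,γ}(x,y) = x^α y^β (1-x-y)^γ / B(α+1,β+1,γ+1)`. -/
noncomputable def Wt (α β γ : ℝ) (x y : ℝ) : ℝ :=
  x ^ α * y ^ β * (1 - x - y) ^ γ / Beta3 (α + 1) (β + 1) (γ + 1)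

/-- The triangular region `T² = {(u,v) : 0 ≤ u, 0 ≤ v, u+v ≤ 1}`. -/
def T2 : Set (ℝ × ℝ) := {p | 0 ≤ p.1 ∧ 0 ≤ p.2 ∧ p.1 + p.2 ≤ 1}

/-- The biorthogonal (monic-basis) polynomial `V_{m,n}^{α,β,γ}`. -/
noncomputable def Vmn (α β γ : ℝ) (m n : ℕ) (x y : ℝ) : ℝ :=
  ∑ i ∈ Finset.range (m + 1), ∑ j ∈ Finset.range (n + 1),
    (-1 : ℝ) ^ (m + n + i + j) * (m.choose i : ℝ) * (n.choose j : ℝ) *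
      (poch (α + 1) m * poch (β + 1) n * poch (α + β + γ + 2) (m + n + i + j)) /
      (poch (α + 1) i * poch (β + 1) j * poch (α + β + γ + 2) (2 * m + 2 * n)) *
      x ^ i * y ^ j

/-!
On the open triangle the Rodrigues formula is expanded by the Leibniz rule into finitely many
Dirichlet monomials `x^p y^q (1-x-y)^r`, each of which integrates (Fubini and the Beta integral) to
`B(p+1, q+1, r+1)`. Once the Gamma factors are collected the double sum over the Leibniz indices
splits into two sums `∑ᵢ (-1)^(k-i) (k choose i) P(i)` with `P` of degree `k` and leading
coefficient `(-1)^k`: these are `k`-th forward differences, equal to `(-1)^k k!`. This replaces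
the `n` integrations by parts of the classical proof.
-/

open Polynomial MeasureTheory Set

lemma poch_eq_ascPochhammer_eval (a : ℝ) (k : ℕ) : poch a k = (ascPochhammer ℝ k).eval a := by
  induction k with
  | zero => simp [poch]
  | succ k ih => rw [poch, Finset.prod_range_succ, ← poch, ih, ascPochhammer_succ_eval]

lemma Real.Gamma_add_nat_eq_ascPochhammer_eval_mul {x : ℝ} (hx : 0 < x) (m : ℕ) :
    Gamma (x + m) = (ascPochhammer ℝ m).eval x * Gamma x := by
  induction m with
  | zero => simp
  | succ m ih =>
    rw [Nat.cast_succ, ← add_assoc, Gamma_add_one (by positivity), ih, ascPochhammer_succ_eval]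
    ring

lemma descPochhammer_eval_mul_Gamma {c : ℝ} {m : ℕ} (h : (m : ℝ) - 1 < c) :
    (descPochhammer ℝ m).eval c * Gamma (c - m + 1) = Gamma (c + 1) := by
  rw [descPochhammer_eval_eq_ascPochhammer,
    ← Real.Gamma_add_nat_eq_ascPochhammer_eval_mul (by linarith)]
  ring_nf

lemma Beta3_pos {x y z : ℝ} (hx : 0 < x) (hy : 0 < y) (hz : 0 < z) : 0 < Beta3 x y z := by
  have := Gamma_pos_of_pos hx
  have := Gamma_pos_of_pos hy
  have := Gamma_pos_of_pos hz
  have := Gamma_pos_of_pos (show 0 < x + y + z by positivity)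
  unfold Beta3
  positivity

lemma Beta3_add_nat {x y z : ℝ} (hx : 0 < x) (hy : 0 < y) (hz : 0 < z) (i j m : ℕ) :
    Beta3 (x + i) (y + j) (z + m)
      = poch x i * poch y j * poch z m / poch (x + y + z) (i + j + m) * Beta3 x y z := by
  have hsum : x + i + (y + j) + (z + m) = x + y + z + (i + j + m : ℕ) := by push_cast; ring
  have := ascPochhammer_pos (i + j + m) (x + y + z) (by positivity)
  simp only [Beta3, poch_eq_ascPochhammer_eval]
  rw [hsum, Real.Gamma_add_nat_eq_ascPochhammer_eval_mul (x := x + y + z) (by positivity),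
    Real.Gamma_add_nat_eq_ascPochhammer_eval_mul hx, Real.Gamma_add_nat_eq_ascPochhammer_eval_mul hy,
    Real.Gamma_add_nat_eq_ascPochhammer_eval_mul hz]
  field_simp

open fwdDiff in
lemma sum_neg_one_pow_mul_choose_mul_ascPochhammer_eval {R : Type*} [CommRing R] [IsDomain R]
    (x : R) (k : ℕ) :
    ∑ i ∈ Finset.range (k + 1), (-1) ^ (k - i) * (k.choose i : R) * (ascPochhammer R k).eval (x - i)
      = (-1) ^ k * k.factorial := by
  set P : R[X] := (ascPochhammer R k).comp (C x - X)
  have hdeg : (C x - X).natDegree = 1 := by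
    rw [← neg_sub, natDegree_neg, natDegree_X_sub_C]
  have hP : P.natDegree = k := by
    rw [natDegree_comp, hdeg, ascPochhammer_natDegree, mul_one]
  have hlead : P.leadingCoeff = (-1) ^ k := by
    rw [leadingCoeff_comp (by rw [hdeg]; exact one_ne_zero), ascPochhammer_natDegree,
      (monic_ascPochhammer R k).leadingCoeff, ← neg_sub, leadingCoeff_neg, leadingCoeff_X_sub_C,
      one_mul]
  have hΔ := congr_fun P.fwdDiff_iter_degree_eq_factorial 0
  rw [fwdDiff_iter_eq_sum_shift, hP, hlead] at hΔ
  simpa [P, zsmul_eq_mul] using hΔ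

lemma integral_rpow_mul_sub_rpow {q r A : ℝ} (hq : -1 < q) (hr : -1 < r) (hA : 0 < A) :
    ∫ t in 0..A, t ^ q * (A - t) ^ r
      = A ^ (q + r + 1) * (Gamma (q + 1) * Gamma (r + 1) / Gamma (q + r + 2)) := by
  set s : ℂ := ((q + 1 : ℝ) : ℂ)
  set u : ℂ := ((r + 1 : ℝ) : ℂ)
  have hcpow : ∀ t ∈ uIcc 0 A,
      ((t ^ q * (A - t) ^ r : ℝ) : ℂ) = (t : ℂ) ^ (s - 1) * ((A : ℂ) - t) ^ (u - 1) := by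
    intro t ht
    rw [uIcc_of_le hA.le] at ht
    simp only [s, u, Complex.ofReal_add, Complex.ofReal_one, add_sub_cancel_right]
    rw [Complex.ofReal_mul, Complex.ofReal_cpow ht.1, Complex.ofReal_cpow (sub_nonneg.2 ht.2),
      Complex.ofReal_sub]
  have hscaled : ((∫ t in 0..A, t ^ q * (A - t) ^ r : ℝ) : ℂ)
      = (A : ℂ) ^ (s + u - 1) * Complex.betaIntegral s u := by
    rw [← Complex.betaIntegral_scaled _ _ hA, ← intervalIntegral.integral_ofReal]
    exact intervalIntegral.integral_congr hcpow
  have hΓ := Complex.Gamma_mul_Gamma_eq_betaIntegral (s := s) (t := u)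
    (by rw [Complex.ofReal_re]; linarith) (by rw [Complex.ofReal_re]; linarith)
  have hsu : s + u - 1 = ((q + r + 1 : ℝ) : ℂ) := by simp only [s, u]; push_cast; ring
  have hsu' : s + u = ((q + r + 2 : ℝ) : ℂ) := by simp only [s, u]; push_cast; ring
  rw [hsu, ← Complex.ofReal_cpow hA.le] at hscaled
  rw [hsu', Complex.Gamma_ofReal, Complex.Gamma_ofReal, Complex.Gamma_ofReal] at hΓ
  have key : (∫ t in 0..A, t ^ q * (A - t) ^ r) * Gamma (q + r + 2)
      = A ^ (q + r + 1) * (Gamma (q + 1) * Gamma (r + 1)) := by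
    exact_mod_cast (by rw [hscaled, hΓ]; ring :
      ((∫ t in 0..A, t ^ q * (A - t) ^ r : ℝ) : ℂ) * (Gamma (q + r + 2) : ℂ)
        = ((A ^ (q + r + 1) : ℝ) : ℂ) * ((Gamma (q + 1) : ℂ) * (Gamma (r + 1) : ℂ)))
  rw [mul_div_assoc', eq_div_iff (Gamma_pos_of_pos (by linarith)).ne', key]

lemma intervalIntegrable_rpow_mul_sub_rpow {q r A : ℝ} (hq : -1 < q) (hr : -1 < r) (hA : 0 < A) :
    IntervalIntegrable (fun t => t ^ q * (A - t) ^ r) volume 0 A := by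
  refine intervalIntegral.intervalIntegrable_of_integral_ne_zero ?_
  rw [integral_rpow_mul_sub_rpow hq hr hA]
  have := Gamma_pos_of_pos (show 0 < q + 1 by linarith)
  have := Gamma_pos_of_pos (show 0 < r + 1 by linarith)
  have := Gamma_pos_of_pos (show 0 < q + r + 2 by linarith)
  positivity

lemma integrableOn_Ioo_rpow_mul_one_sub_rpow {q r : ℝ} (hq : -1 < q) (hr : -1 < r) :
    IntegrableOn (fun x : ℝ => x ^ q * (1 - x) ^ r) (Ioo 0 1) :=
  (intervalIntegrable_iff_integrableOn_Ioo_of_le zero_le_one).1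
    (intervalIntegrable_rpow_mul_sub_rpow hq hr one_pos)

def T2open : Set (ℝ × ℝ) := {p | 0 < p.1 ∧ 0 < p.2 ∧ p.1 + p.2 < 1}

noncomputable def triMonomial (p q r : ℝ) (z : ℝ × ℝ) : ℝ :=
  z.1 ^ p * z.2 ^ q * (1 - z.1 - z.2) ^ r

lemma measurableSet_T2open : MeasurableSet T2open :=
  (measurableSet_lt measurable_const measurable_fst).inter
    ((measurableSet_lt measurable_const measurable_snd).inter
      (measurableSet_lt (measurable_fst.add measurable_snd) measurable_const))

lemma volume_setOf_fst_eq (a : ℝ) : volume {p : ℝ × ℝ | p.1 = a} = 0 := by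
  rw [show {p : ℝ × ℝ | p.1 = a} = {a} ×ˢ univ by ext; simp, Measure.volume_eq_prod,
    Measure.prod_prod, Real.volume_singleton, zero_mul]

lemma volume_setOf_snd_eq {g : ℝ → ℝ} (hg : Measurable g) :
    volume {p : ℝ × ℝ | p.2 = g p.1} = 0 := by
  have hmeas : MeasurableSet {p : ℝ × ℝ | p.2 = g p.1} :=
    measurableSet_eq_fun measurable_snd (hg.comp measurable_fst)
  rw [Measure.volume_eq_prod, Measure.measure_prod_null hmeas]
  refine .of_forall fun x => ?_
  simp [preimage]

lemma T2_ae_eq_T2open : T2 =ᵐ[volume] T2open := by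
  have hsub : T2open ⊆ T2 := fun p ⟨h1, h2, h3⟩ => ⟨h1.le, h2.le, h3.le⟩
  have hdiff : T2 \ T2open ⊆
      {p | p.1 = 0} ∪ {p | p.2 = (fun _ => 0) p.1} ∪ {p | p.2 = (fun x => 1 - x) p.1} := by
    rintro p ⟨⟨h1, h2, h3⟩, hp⟩
    simp only [T2open, mem_ofPred_eq, not_and_or, not_lt] at hp
    simp only [mem_union, mem_ofPred_eq]
    grind
  refine ae_eq_set.2 ⟨measure_mono_null hdiff ?_, by rw [sdiff_eq_empty.2 hsub, measure_empty]⟩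
  exact measure_union_null (measure_union_null (volume_setOf_fst_eq 0)
    (volume_setOf_snd_eq measurable_const))
    (volume_setOf_snd_eq (measurable_const.sub measurable_id))

lemma indicator_T2open_apply (f : ℝ × ℝ → ℝ) (x y : ℝ) :
    T2open.indicator f (x, y)
      = (Ioo 0 1).indicator (fun x => (Ioo 0 (1 - x)).indicator (fun y => f (x, y)) y) x := by
  simp only [indicator_apply, T2open, mem_ofPred_eq, mem_Ioo]
  split_ifs <;> grind

section Dirichlet

variable {p q r : ℝ}

lemma measurable_triMonomial : Measurable (triMonomial p q r) := by
  unfold triMonomial; fun_prop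

lemma triMonomial_nonneg {z : ℝ × ℝ} (hz : z ∈ T2open) : 0 ≤ triMonomial p q r z := by
  obtain ⟨h1, h2, h3⟩ := hz
  have : 0 < 1 - z.1 - z.2 := by linarith
  unfold triMonomial; positivity

lemma triMonomial_mul_pow_mul_pow {z : ℝ × ℝ} (hz : z ∈ T2open) (k l : ℕ) :
    triMonomial p q r z * z.1 ^ k * z.2 ^ l = triMonomial (p + k) (q + l) r z := by
  obtain ⟨hx, hy, -⟩ := hz
  rw [triMonomial, triMonomial, rpow_add hx, rpow_add hy, rpow_natCast, rpow_natCast]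
  ring

lemma triMonomial_slice (x : ℝ) :
    (fun y => triMonomial p q r (x, y)) = fun y => x ^ p * (y ^ q * ((1 - x) - y) ^ r) := by
  ext y
  simp only [triMonomial, sub_sub]
  ring

lemma integrable_indicator_T2open_triMonomial_slice (hq : -1 < q) (hr : -1 < r) (x : ℝ) :
    Integrable (fun y => T2open.indicator (triMonomial p q r) (x, y)) := by
  simp only [indicator_T2open_apply]
  by_cases hx : x ∈ Ioo (0 : ℝ) 1
  · simp only [indicator_of_mem hx]
    rw [integrable_indicator_iff measurableSet_Ioo, triMonomial_slice,
      ← intervalIntegrable_iff_integrableOn_Ioo_of_le (sub_pos.2 hx.2).le]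
    exact (intervalIntegrable_rpow_mul_sub_rpow hq hr (sub_pos.2 hx.2)).const_mul (x ^ p)
  · simp only [indicator_of_notMem hx]
    exact integrable_zero ℝ ℝ volume

lemma integral_indicator_T2open_triMonomial_slice (hq : -1 < q) (hr : -1 < r) (x : ℝ) :
    ∫ y, T2open.indicator (triMonomial p q r) (x, y)
      = (Ioo 0 1).indicator (fun x => x ^ p * (1 - x) ^ (q + r + 1)) x
          * (Gamma (q + 1) * Gamma (r + 1) / Gamma (q + r + 2)) := by
  simp only [indicator_T2open_apply]
  by_cases hx : x ∈ Ioo (0 : ℝ) 1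
  · simp only [indicator_of_mem hx]
    rw [integral_indicator measurableSet_Ioo, triMonomial_slice, ← integral_Ioc_eq_integral_Ioo,
      ← intervalIntegral.integral_of_le (sub_pos.2 hx.2).le, intervalIntegral.integral_const_mul,
      integral_rpow_mul_sub_rpow hq hr (sub_pos.2 hx.2)]
    ring
  · simp only [indicator_of_notMem hx, integral_zero, zero_mul]

lemma integrable_indicator_T2open_triMonomial (hp : -1 < p) (hq : -1 < q) (hr : -1 < r) :
    Integrable (T2open.indicator (triMonomial p q r)) := by
  rw [Measure.volume_eq_prod, integrable_prod_iff
    (measurable_triMonomial.indicator measurableSet_T2open).aestronglyMeasurable]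
  refine ⟨.of_forall (integrable_indicator_T2open_triMonomial_slice hq hr), ?_⟩
  have hnorm : ∀ z, ‖T2open.indicator (triMonomial p q r) z‖
      = T2open.indicator (triMonomial p q r) z :=
    fun z => Real.norm_of_nonneg (indicator_nonneg (fun _ hz => triMonomial_nonneg hz) z)
  simp only [hnorm, integral_indicator_T2open_triMonomial_slice hq hr]
  exact ((integrable_indicator_iff measurableSet_Ioo).2
    (integrableOn_Ioo_rpow_mul_one_sub_rpow hp (by linarith))).mul_const _

lemma integrableOn_T2open_triMonomial (hp : -1 < p) (hq : -1 < q) (hr : -1 < r) :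
    IntegrableOn (triMonomial p q r) T2open :=
  (integrable_indicator_iff measurableSet_T2open).1
    (integrable_indicator_T2open_triMonomial hp hq hr)

lemma setIntegral_T2open_triMonomial (hp : -1 < p) (hq : -1 < q) (hr : -1 < r) :
    ∫ z in T2open, triMonomial p q r z = Beta3 (p + 1) (q + 1) (r + 1) := by
  have hint := integrable_indicator_T2open_triMonomial hp hq hr
  rw [Measure.volume_eq_prod] at hint
  rw [← integral_indicator measurableSet_T2open, Measure.volume_eq_prod, integral_prod _ hint]
  simp only [integral_indicator_T2open_triMonomial_slice hq hr]
  rw [integral_mul_const, integral_indicator measurableSet_Ioo, ← integral_Ioc_eq_integral_Ioo,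
    ← intervalIntegral.integral_of_le zero_le_one,
    integral_rpow_mul_sub_rpow hp (by linarith) one_pos, Beta3, one_rpow, one_mul,
    show p + (q + r + 1) + 2 = p + 1 + (q + 1) + (r + 1) by ring,
    show q + r + 1 + 1 = q + r + 2 by ring]
  have := Gamma_pos_of_pos (show 0 < q + r + 2 by linarith)
  field_simp

end Dirichlet

noncomputable def rpowLeibnizCoeff (p q : ℝ) (m i : ℕ) : ℝ :=
  m.choose i * (-1) ^ (m - i) * (descPochhammer ℝ i).eval p * (descPochhammer ℝ (m - i)).eval q

lemma contDiffAt_const_sub_rpow {q A x : ℝ} (hxA : x < A) (m : ℕ) :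
    ContDiffAt ℝ m (fun t => (A - t) ^ q) x :=
  (contDiffAt_rpow_const (Or.inl (sub_pos.2 hxA).ne')).comp x (contDiffAt_const.sub contDiffAt_id)

lemma iteratedDeriv_rpow_mul_sub_rpow {p q A x : ℝ} (hx : 0 < x) (hxA : x < A) (m : ℕ) :
    iteratedDeriv m (fun t => t ^ p * (A - t) ^ q) x
      = ∑ i ∈ Finset.range (m + 1),
          rpowLeibnizCoeff p q m i * (x ^ (p - i) * (A - x) ^ (q - (m - i : ℕ))) := by
  rw [iteratedDeriv_fun_mul (contDiffAt_rpow_const (Or.inl hx.ne'))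
    (contDiffAt_const_sub_rpow hxA m)]
  refine Finset.sum_congr rfl fun i _ => ?_
  rw [iteratedDeriv_comp_const_sub (m - i) (fun t : ℝ => t ^ q), iteratedDeriv_eq_iterate,
    iteratedDeriv_eq_iterate, Real.iter_deriv_rpow_const]
  simp only [Real.iter_deriv_rpow_const, rpowLeibnizCoeff, smul_eq_mul]
  ring

lemma iteratedDeriv_snd_rpow {a b c s y : ℝ} (hy : 0 < y) (hsy : s + y < 1) (l : ℕ) :
    iteratedDeriv l (fun t => s ^ a * t ^ b * (1 - s - t) ^ c) y
      = ∑ j ∈ Finset.range (l + 1), rpowLeibnizCoeff b c l j * y ^ (b - j)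
          * (s ^ a * ((1 - y) - s) ^ (c - (l - j : ℕ))) := by
  have hfun : (fun t => s ^ a * t ^ b * (1 - s - t) ^ c)
      = fun t => s ^ a * (t ^ b * ((1 - s) - t) ^ c) := by
    ext t; rw [sub_sub 1 s t]; ring
  rw [hfun, iteratedDeriv_const_mul_field, iteratedDeriv_rpow_mul_sub_rpow hy (by linarith),
    Finset.mul_sum]
  refine Finset.sum_congr rfl fun j _ => ?_
  rw [show 1 - s - y = 1 - y - s by ring]
  ring

lemma pderiv2_rpow (a b c : ℝ) (k l : ℕ) {x y : ℝ} (hxy : (x, y) ∈ T2open) :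
    pderiv2 k l (fun u v => u ^ a * v ^ b * (1 - u - v) ^ c) x y
      = ∑ j ∈ Finset.range (l + 1), ∑ i ∈ Finset.range (k + 1),
          rpowLeibnizCoeff b c l j * rpowLeibnizCoeff a (c - (l - j : ℕ)) k i
            * triMonomial (a - i) (b - j) (c - (l - j : ℕ) - (k - i : ℕ)) (x, y) := by
  obtain ⟨hx, hy, hxy⟩ : 0 < x ∧ 0 < y ∧ x + y < 1 := hxy
  have hx1 : x < 1 - y := by linarith
  have hinner : (fun s => iteratedDeriv l (fun t => s ^ a * t ^ b * (1 - s - t) ^ c) y)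
      =ᶠ[nhds x] fun s => ∑ j ∈ Finset.range (l + 1), rpowLeibnizCoeff b c l j * y ^ (b - j)
          * (s ^ a * ((1 - y) - s) ^ (c - (l - j : ℕ))) :=
    Filter.eventuallyEq_of_mem (Ioo_mem_nhds hx hx1)
      fun s hs => iteratedDeriv_snd_rpow hy (by linarith [hs.2]) l
  rw [pderiv2, hinner.iteratedDeriv_eq, iteratedDeriv_fun_sum (f := fun j s =>
      rpowLeibnizCoeff b c l j * y ^ (b - j) * (s ^ a * ((1 - y) - s) ^ (c - (l - j : ℕ))))
    fun j _ => contDiffAt_const.mul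
      ((contDiffAt_rpow_const (Or.inl hx.ne')).mul (contDiffAt_const_sub_rpow hx1 k))]
  refine Finset.sum_congr rfl fun j _ => ?_
  rw [iteratedDeriv_const_mul_field, iteratedDeriv_rpow_mul_sub_rpow hx hx1, Finset.mul_sum]
  refine Finset.sum_congr rfl fun i _ => ?_
  rw [triMonomial, show 1 - y - x = 1 - x - y by ring]
  ring

lemma rpowLeibnizCoeff_mul_Gamma_mul_Gamma {a c : ℝ} {k i : ℕ} (hi : i ≤ k)
    (ha : (k : ℝ) - 1 < a) (hc : ((k - i : ℕ) : ℝ) - 1 < c) :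
    rpowLeibnizCoeff a c k i * Gamma (a - i + k + 1) * Gamma (c - (k - i : ℕ) + 1)
      = (-1) ^ (k - i) * k.choose i * (ascPochhammer ℝ k).eval (a + 1 - i)
          * (Gamma (a + 1) * Gamma (c + 1)) := by
  have hik : (i : ℝ) ≤ k := Nat.cast_le.2 hi
  have hΓa : Gamma (a - i + k + 1)
      = (ascPochhammer ℝ k).eval (a + 1 - i) * Gamma (a - i + 1) := by
    rw [show a - i + k + 1 = (a + 1 - i) + k by ring,
      Real.Gamma_add_nat_eq_ascPochhammer_eval_mul (by linarith)]
    ring_nf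
  rw [rpowLeibnizCoeff, hΓa, ← descPochhammer_eval_mul_Gamma (show (i : ℝ) - 1 < a by linarith),
    ← descPochhammer_eval_mul_Gamma hc]
  ring

lemma sum_sum_rpowLeibnizCoeff_mul_Beta3 {a b c : ℝ} {k l : ℕ} (ha : (k : ℝ) - 1 < a)
    (hb : (l : ℝ) - 1 < b) (hc : (k : ℝ) + l - 1 < c) :
    ∑ j ∈ Finset.range (l + 1), ∑ i ∈ Finset.range (k + 1),
        rpowLeibnizCoeff b c l j * rpowLeibnizCoeff a (c - (l - j : ℕ)) k i
          * Beta3 (a - i + k + 1) (b - j + l + 1) (c - (l - j : ℕ) - (k - i : ℕ) + 1)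
      = (-1) ^ (k + l) * k.factorial * l.factorial * Beta3 (a + 1) (b + 1) (c + 1) := by
  have hterm : ∀ j ∈ Finset.range (l + 1), ∀ i ∈ Finset.range (k + 1),
      rpowLeibnizCoeff b c l j * rpowLeibnizCoeff a (c - (l - j : ℕ)) k i
          * Beta3 (a - i + k + 1) (b - j + l + 1) (c - (l - j : ℕ) - (k - i : ℕ) + 1)
        = ((-1) ^ (l - j) * l.choose j * (ascPochhammer ℝ l).eval (b + 1 - j))
          * ((-1) ^ (k - i) * k.choose i * (ascPochhammer ℝ k).eval (a + 1 - i))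
          * Beta3 (a + 1) (b + 1) (c + 1) := by
    intro j hj i hi
    have hj := Finset.mem_range_succ_iff.1 hj
    have hi := Finset.mem_range_succ_iff.1 hi
    have hlj : ((l - j : ℕ) : ℝ) = l - j := Nat.cast_sub hj
    have hki : ((k - i : ℕ) : ℝ) = k - i := Nat.cast_sub hi
    have hjl : (j : ℝ) ≤ l := Nat.cast_le.2 hj
    have hik : (i : ℝ) ≤ k := Nat.cast_le.2 hi
    have e₁ := rpowLeibnizCoeff_mul_Gamma_mul_Gamma (c := c - (l - j : ℕ)) hi ha
      (by rw [hlj, hki]; linarith)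
    have e₂ := rpowLeibnizCoeff_mul_Gamma_mul_Gamma (c := c) hj hb (by rw [hlj]; linarith)
    rw [Beta3, Beta3, show (a - i + k + 1) + (b - j + l + 1) + (c - (l - j : ℕ) - (k - i : ℕ) + 1)
      = (a + 1) + (b + 1) + (c + 1) by rw [hlj, hki]; ring]
    linear_combination
      (rpowLeibnizCoeff b c l j * Gamma (b - j + l + 1) / Gamma (a + 1 + (b + 1) + (c + 1))) * e₁
      + ((-1) ^ (k - i) * k.choose i * (ascPochhammer ℝ k).eval (a + 1 - i) * Gamma (a + 1)
          / Gamma (a + 1 + (b + 1) + (c + 1))) * e₂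
  simp_rw [Finset.sum_congr rfl fun j hj => Finset.sum_congr rfl (hterm j hj), ← Finset.sum_mul,
    ← Finset.mul_sum, ← Finset.sum_mul, sum_neg_one_pow_mul_choose_mul_ascPochhammer_eval]
  ring

theorem setIntegral_T2_pderiv2_mul_pow_mul_pow {a b c : ℝ} {k l : ℕ} (ha : (k : ℝ) - 1 < a)
    (hb : (l : ℝ) - 1 < b) (hc : (k : ℝ) + l - 1 < c) :
    ∫ z in T2, pderiv2 k l (fun u v => u ^ a * v ^ b * (1 - u - v) ^ c) z.1 z.2 * z.1 ^ k * z.2 ^ l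
      = (-1) ^ (k + l) * k.factorial * l.factorial * Beta3 (a + 1) (b + 1) (c + 1) := by
  have hmono : ∀ j ∈ Finset.range (l + 1), ∀ i ∈ Finset.range (k + 1),
      IntegrableOn (triMonomial (a - i + k) (b - j + l) (c - (l - j : ℕ) - (k - i : ℕ))) T2open
        ∧ ∫ z in T2open, triMonomial (a - i + k) (b - j + l) (c - (l - j : ℕ) - (k - i : ℕ)) z
          = Beta3 (a - i + k + 1) (b - j + l + 1) (c - (l - j : ℕ) - (k - i : ℕ) + 1) := by
    intro j hj i hi
    have hj := Finset.mem_range_succ_iff.1 hj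
    have hi := Finset.mem_range_succ_iff.1 hi
    have : (j : ℝ) ≤ l := Nat.cast_le.2 hj
    have : (i : ℝ) ≤ k := Nat.cast_le.2 hi
    have hp : -1 < a - i + k := by linarith
    have hq : -1 < b - j + l := by linarith
    have hr : -1 < c - (l - j : ℕ) - (k - i : ℕ) := by
      rw [Nat.cast_sub hj, Nat.cast_sub hi]; linarith
    exact ⟨integrableOn_T2open_triMonomial hp hq hr, setIntegral_T2open_triMonomial hp hq hr⟩
  rw [setIntegral_congr_set T2_ae_eq_T2open, setIntegral_congr_fun measurableSet_T2open
    (g := fun z => ∑ j ∈ Finset.range (l + 1), ∑ i ∈ Finset.range (k + 1),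
      rpowLeibnizCoeff b c l j * rpowLeibnizCoeff a (c - (l - j : ℕ)) k i
        * triMonomial (a - i + k) (b - j + l) (c - (l - j : ℕ) - (k - i : ℕ)) z)
    fun z hz => by
      simp only [pderiv2_rpow a b c k l hz, Finset.sum_mul]
      refine Finset.sum_congr rfl fun j _ => Finset.sum_congr rfl fun i _ => ?_
      rw [← triMonomial_mul_pow_mul_pow hz]
      ring,
    integral_finsetSum _ fun j hj => integrable_finsetSum _ fun i hi =>
      (hmono j hj i hi).1.const_mul _, ← sum_sum_rpowLeibnizCoeff_mul_Beta3 ha hb hc]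
  refine Finset.sum_congr rfl fun j hj => ?_
  rw [integral_finsetSum _ fun i hi => (hmono j hj i hi).1.const_mul _]
  refine Finset.sum_congr rfl fun i hi => ?_
  rw [integral_const_mul, (hmono j hj i hi).2]

/-- The value of the diagonal moment of `U_{k,n}^{α,β,γ}` against the Jacobi
weight on the triangle. -/
theorem stmt5 (α β γ : ℝ) (hα : -1 < α) (hβ : -1 < β) (hγ : -1 < γ)
    (k n : ℕ) (hkn : k ≤ n) :
    ∫ p in T2, Ukn α β γ k n p.1 p.2 * p.1 ^ k * p.2 ^ (n - k) * Wt α β γ p.1 p.2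
      = (-1 : ℝ) ^ n * poch (α + 1) k * poch (β + 1) (n - k) * poch (γ + 1) n *
          (Nat.factorial k : ℝ) * (Nat.factorial (n - k) : ℝ) / poch (α + β + γ + 3) (2 * n) := by
  have hB := Beta3_pos (show 0 < α + 1 by linarith) (show 0 < β + 1 by linarith)
    (show 0 < γ + 1 by linarith)
  have hUW : ∀ z ∈ T2open, Ukn α β γ k n z.1 z.2 * z.1 ^ k * z.2 ^ (n - k) * Wt α β γ z.1 z.2
      = pderiv2 k (n - k) (fun u v => u ^ ((k : ℝ) + α) * v ^ ((n : ℝ) - k + β)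
          * (1 - u - v) ^ ((n : ℝ) + γ)) z.1 z.2 * z.1 ^ k * z.2 ^ (n - k)
        / Beta3 (α + 1) (β + 1) (γ + 1) := by
    rintro z ⟨hx, hy, hxy⟩
    have : 0 < 1 - z.1 - z.2 := by linarith
    have : 0 < z.1 ^ α * z.2 ^ β * (1 - z.1 - z.2) ^ γ := by positivity
    simp only [Ukn, Wt]
    field_simp
  have hnk : ((n - k : ℕ) : ℝ) = n - k := Nat.cast_sub hkn
  rw [setIntegral_congr_set T2_ae_eq_T2open, setIntegral_congr_fun measurableSet_T2open hUW,
    integral_div, ← setIntegral_congr_set T2_ae_eq_T2open,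
    setIntegral_T2_pderiv2_mul_pow_mul_pow (by linarith) (by rw [hnk]; linarith)
      (by rw [hnk]; linarith),
    show (k : ℝ) + α + 1 = α + 1 + k by ring,
    show (n : ℝ) - k + β + 1 = β + 1 + (n - k : ℕ) by rw [hnk]; ring,
    show (n : ℝ) + γ + 1 = γ + 1 + n by ring,
    Beta3_add_nat (by linarith) (by linarith) (by linarith), show k + (n - k) + n = 2 * n by omega,
    show α + 1 + (β + 1) + (γ + 1) = α + β + γ + 3 by ring, Nat.add_sub_cancel' hkn]
  field_simp
end

section
/- Let a,b,c,d > 0 and e be real, and let 0 < s < 1 and 0 < t < 1-s. Then I₁(s,t) := ∫_0^t (∫_0^s u^{a-1} (s-u)^{c-1} (1-u-v)^{-e} du) v^{b-1} (t-v)^{d-1} dv = B(a,c) B(b,d) s^{a+c-1} t^{b+d-1} · F₂(e; a, b; a+c, b+d; s, t), the F₂ series converging since s+t < 1. -/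
/-!
Expand `(1 - u - v)^(-e)` as the double binomial series `∑ (e)_{i+j} uⁱ vʲ / (i! j!)`, obtained
from the one-variable binomial series by grouping the terms along antidiagonals. On the rectangle
`[0, s] × [0, t]` the series is dominated by its absolutely convergent value at the corner
`(s, t)`, because `s + t < 1`, so it may be integrated termwise against the two Beta kernels.
Each monomial then gives a Beta integral,
`∫₀ˢ u^(a+i-1) (s-u)^(c-1) du = B(a+i, c) s^(a+c+i-1) = B(a, c) (a)ᵢ / (a+c)ᵢ s^(a+c-1) sⁱ`,
and collecting the factors yields the terms of `F₂`.
-/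

open Real intervalIntegral

/-- The Beta function `B(x,y) = Γ(x)Γ(y)/Γ(x+y)`. -/
noncomputable def Beta2 (x y : ℝ) : ℝ := Real.Gamma x * Real.Gamma y / Real.Gamma (x + y)

/-- The second Appell hypergeometric function
`F₂(a; b₁,b₂; c₁,c₂; x,y) = Σ_{i,j} (a)_{i+j}(b₁)_i(b₂)_j/((c₁)_i(c₂)_j i! j!) xⁱ yʲ`. -/
noncomputable def F2 (a b₁ b₂ c₁ c₂ x y : ℝ) : ℝ :=
  ∑' (i : ℕ) (j : ℕ),
    poch a (i + j) * poch b₁ i * poch b₂ j /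
      (poch c₁ i * poch c₂ j * (Nat.factorial i : ℝ) * (Nat.factorial j : ℝ)) * x ^ i * y ^ j

open Finset MeasureTheory
open scoped Nat

lemma poch_eq_eval_ascPochhammer (a : ℝ) (n : ℕ) : poch a n = (ascPochhammer ℝ n).eval a := by
  induction n with
  | zero => simp [poch]
  | succ n ih => simp [poch, prod_range_succ, ascPochhammer_succ_right, ← ih]

lemma poch_pos {a : ℝ} (ha : 0 < a) (n : ℕ) : 0 < poch a n :=
  prod_pos fun _ _ => by positivity

lemma abs_poch_le (a : ℝ) (n : ℕ) : |poch a n| ≤ poch |a| n := by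
  rw [poch, abs_prod]
  exact prod_le_prod (fun _ _ => abs_nonneg _) fun i _ =>
    (abs_add_le _ _).trans_eq (by rw [Nat.abs_cast])

lemma poch_le_poch {a b : ℝ} (ha : 0 ≤ a) (hab : a ≤ b) (n : ℕ) : poch a n ≤ poch b n :=
  prod_le_prod (fun _ _ => by positivity) fun _ _ => by linarith

lemma Gamma_add_nat_eq_mul_poch {p : ℝ} (hp : 0 < p) (n : ℕ) :
    Gamma (p + n) = Gamma p * poch p n := by
  induction n with
  | zero => simp [poch]
  | succ n ih =>
    rw [Nat.cast_succ, ← add_assoc, Gamma_add_one (by positivity), ih, poch, poch,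
      prod_range_succ]
    ring

lemma Beta2_add_nat {p q : ℝ} (hp : 0 < p) (hq : 0 < q) (n : ℕ) :
    Beta2 (p + n) q = Beta2 p q * (poch p n / poch (p + q) n) := by
  have hpq : 0 < p + q := by linarith
  have := (Gamma_pos_of_pos hpq).ne'
  have := (poch_pos hpq n).ne'
  rw [Beta2, Beta2, add_right_comm, Gamma_add_nat_eq_mul_poch hp,
    Gamma_add_nat_eq_mul_poch hpq]
  field_simp

theorem hasSum_poch_div_factorial_mul_pow (e : ℝ) {x : ℝ} (hx : |x| < 1) :
    HasSum (fun n => poch e n / n ! * x ^ n) ((1 - x) ^ (-e)) := by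
  have h := (one_div_one_sub_rpow_hasFPowerSeriesOnBall_zero e).hasSum (y := x) <| by
    simpa [Metric.mem_eball, enorm_eq_nnnorm, ← NNReal.coe_lt_coe] using hx
  have h1x : 0 ≤ 1 - x := by linarith [le_abs_self x]
  rw [zero_add, one_div, ← rpow_neg h1x] at h
  refine h.congr_fun fun n => ?_
  rw [FormalMultilinearSeries.ofScalars_apply_eq, smul_eq_mul, Ring.choose_eq_smul,
    Polynomial.descPochhammer_smeval_eq_ascPochhammer, Polynomial.ascPochhammer_smeval_eq_eval,
    poch_eq_eval_ascPochhammer, smul_eq_mul]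
  ring_nf

section Antidiagonal

variable {A : Type*} [AddCommMonoid A] [HasAntidiagonal A]

lemma summable_of_nonneg_of_summable_sum_antidiagonal {f : A × A → ℝ} (hf : ∀ p, 0 ≤ f p)
    (h : Summable fun n => ∑ p ∈ antidiagonal n, f p) : Summable f := by
  rw [← HasAntidiagonal.sigmaAntidiagonalEquivProd.summable_iff]
  refine (summable_sigma_of_nonneg fun _ => hf _).mpr ⟨fun _ => .of_finite, ?_⟩
  simpa only [HasAntidiagonal.sigmaAntidiagonalEquivProd_apply, ← Finset.tsum_subtype] using h

lemma HasSum.of_sum_antidiagonal {α : Type*} [AddCommMonoid α] [TopologicalSpace α]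
    [ContinuousAdd α] [T3Space α] {f : A × A → α} {a : α} (hf : Summable f)
    (h : HasSum (fun n => ∑ p ∈ antidiagonal n, f p) a) : HasSum f a := by
  have hσ := (HasAntidiagonal.sigmaAntidiagonalEquivProd.hasSum_iff.mpr hf.hasSum).sigma
    fun n => (Finset.hasSum _ _ : HasSum (fun p : antidiagonal n => f p) _)
  exact h.unique hσ ▸ hf.hasSum

end Antidiagonal

lemma sum_antidiagonal_div_factorial_mul_pow_mul_pow (x y : ℝ) (n : ℕ) :
    ∑ p ∈ antidiagonal n, x ^ p.1 * y ^ p.2 / (p.1 ! * p.2 !) = (x + y) ^ n / n ! := by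
  rw [(Commute.all x y).add_pow', sum_div]
  refine sum_congr rfl fun p hp => ?_
  rw [HasAntidiagonal.mem_antidiagonal] at hp
  subst hp
  have h : ((p.1 + p.2).choose p.1 * p.1 ! * p.2 ! : ℝ) = (p.1 + p.2)! := by
    exact_mod_cast Nat.choose_symm_add ▸ Nat.add_choose_mul_factorial_mul_factorial p.1 p.2
  have hc : ((p.1 + p.2).choose p.1 : ℝ) ≠ 0 := by
    exact_mod_cast (Nat.choose_pos (Nat.le_add_right _ _)).ne'
  rw [nsmul_eq_mul, ← h]
  field_simp

lemma sum_antidiagonal_poch_div_factorial_mul_pow_mul_pow (e x y : ℝ) (n : ℕ) :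
    ∑ p ∈ antidiagonal n, poch e (p.1 + p.2) / (p.1 ! * p.2 !) * x ^ p.1 * y ^ p.2
      = poch e n / n ! * (x + y) ^ n := by
  rw [mul_comm_div, ← sum_antidiagonal_div_factorial_mul_pow_mul_pow, mul_sum]
  refine sum_congr rfl fun p hp => ?_
  rw [HasAntidiagonal.mem_antidiagonal.mp hp]
  ring

theorem hasSum_poch_add_div_factorial_mul_pow_mul_pow (e : ℝ) {x y : ℝ}
    (hxy : |x| + |y| < 1) :
    HasSum (fun p : ℕ × ℕ => poch e (p.1 + p.2) / (p.1 ! * p.2 !) * x ^ p.1 * y ^ p.2)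
      ((1 - x - y) ^ (-e)) := by
  have hmajorant : Summable fun p : ℕ × ℕ =>
      poch |e| (p.1 + p.2) / (p.1 ! * p.2 !) * |x| ^ p.1 * |y| ^ p.2 := by
    refine summable_of_nonneg_of_summable_sum_antidiagonal (fun p => ?_) ?_
    · have := (abs_nonneg _).trans (abs_poch_le e (p.1 + p.2))
      positivity
    · simp only [sum_antidiagonal_poch_div_factorial_mul_pow_mul_pow]
      exact (hasSum_poch_div_factorial_mul_pow |e|
        (by rwa [abs_of_nonneg (by positivity)])).summable
  refine .of_sum_antidiagonal (hmajorant.of_norm_bounded fun p => ?_) ?_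
  · simp only [norm_mul, norm_div, norm_pow, Real.norm_eq_abs, Nat.abs_cast]
    gcongr
    exact abs_poch_le _ _
  · simp only [sum_antidiagonal_poch_div_factorial_mul_pow_mul_pow]
    rw [sub_sub]
    exact hasSum_poch_div_factorial_mul_pow e ((abs_add_le x y).trans_lt hxy)

theorem integral_rpow_mul_sub_rpow_s9 {p q s : ℝ} (hp : 0 < p) (hq : 0 < q) (hs : 0 < s) :
    ∫ u in 0..s, u ^ (p - 1) * (s - u) ^ (q - 1) = Beta2 p q * s ^ (p + q - 1) := by
  have h := Complex.betaIntegral_scaled p q hs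
  have hcast : (∫ u in 0..s, (u : ℂ) ^ ((p : ℂ) - 1) * ((s : ℂ) - u) ^ ((q : ℂ) - 1))
      = ((∫ u in 0..s, u ^ (p - 1) * (s - u) ^ (q - 1) : ℝ) : ℂ) := by
    rw [← integral_ofReal]
    refine integral_congr fun u hu => ?_
    rw [Set.uIcc_of_le hs.le] at hu
    push_cast
    rw [Complex.ofReal_cpow hu.1, Complex.ofReal_cpow (sub_nonneg.mpr hu.2)]
    push_cast
    ring
  have hpow : (s : ℂ) ^ ((p : ℂ) + q - 1) = ((s ^ (p + q - 1) : ℝ) : ℂ) := by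
    rw [Complex.ofReal_cpow hs.le]
    push_cast
    rfl
  rw [hcast, hpow] at h
  have := congrArg Complex.re h
  rw [Complex.ofReal_re, Complex.re_ofReal_mul] at this
  rw [this, mul_comm]
  congr 1
  exact (ProbabilityTheory.beta_eq_betaIntegralReal p q hp hq).symm

theorem intervalIntegrable_rpow_mul_sub_rpow_s9 {p q s : ℝ} (hp : 0 < p) (hq : 0 < q)
    (hs : 0 < s) : IntervalIntegrable (fun u => u ^ (p - 1) * (s - u) ^ (q - 1)) volume 0 s :=
  intervalIntegrable_of_integral_ne_zero <| by
    rw [integral_rpow_mul_sub_rpow_s9 hp hq hs]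
    exact (mul_pos (ProbabilityTheory.beta_pos hp hq) (rpow_pos_of_pos hs _)).ne'

theorem integral_rpow_mul_sub_rpow_mul_pow {p q s : ℝ} (hp : 0 < p) (hq : 0 < q) (hs : 0 < s)
    (n : ℕ) : ∫ u in 0..s, u ^ (p - 1) * (s - u) ^ (q - 1) * u ^ n
      = Beta2 p q * s ^ (p + q - 1) * (poch p n / poch (p + q) n * s ^ n) := by
  have hshift : ∫ u in 0..s, u ^ (p - 1) * (s - u) ^ (q - 1) * u ^ n
      = ∫ u in 0..s, u ^ (p + n - 1) * (s - u) ^ (q - 1) := by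
    refine integral_congr_ae (ae_of_all _ fun u hu => ?_)
    rw [Set.uIoc_of_le hs.le] at hu
    rw [mul_right_comm, ← rpow_natCast, ← rpow_add hu.1, sub_add_eq_add_sub]
  rw [hshift, integral_rpow_mul_sub_rpow_s9 (by positivity) hq hs, Beta2_add_nat hp hq,
    show p + n + q - 1 = (p + q - 1) + n by ring, rpow_add hs, rpow_natCast]
  ring

theorem intervalIntegral.integral_mul_tsum_of_abs_le {ι : Type*} [Countable ι] {a b : ℝ}
    (hab : a ≤ b) {K : ℝ → ℝ} {G : ι → ℝ → ℝ} {M : ι → ℝ}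
    (hK : IntervalIntegrable K volume a b) (hG : ∀ i, Continuous (G i))
    (hGM : ∀ i, ∀ x ∈ Set.Ioc a b, |G i x| ≤ M i) (hM : Summable M) :
    ∫ x in a..b, K x * ∑' i, G i x = ∑' i, ∫ x in a..b, K x * G i x := by
  rw [intervalIntegrable_iff_integrableOn_Ioc_of_le hab] at hK
  simp only [integral_of_le hab]
  have hbound :
      ∀ i, ∀ᵐ x ∂(volume.restrict (Set.Ioc a b)), ‖K x * G i x‖ ≤ ‖K x‖ * M i :=
    fun i => (ae_restrict_mem measurableSet_Ioc).mono fun x hx => by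
      rw [norm_mul]
      exact mul_le_mul_of_nonneg_left (hGM i x hx) (norm_nonneg _)
  have hint : ∀ i, Integrable (fun x => K x * G i x) (volume.restrict (Set.Ioc a b)) :=
    fun i => (hK.norm.mul_const (M i)).mono'
      (hK.aestronglyMeasurable.mul (hG i).aestronglyMeasurable) (hbound i)
  have hsum : Summable fun i => ∫ x in Set.Ioc a b, ‖K x * G i x‖ := by
    refine (hM.mul_left (∫ x in Set.Ioc a b, ‖K x‖)).of_nonneg_of_le
      (fun i => MeasureTheory.integral_nonneg fun _ => norm_nonneg _) fun i => ?_
    rw [← MeasureTheory.integral_mul_const]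
    exact MeasureTheory.integral_mono_ae (hint i).norm (hK.norm.mul_const _) (hbound i)
  rw [integral_tsum_of_summable_integral_norm hint hsum]
  simp_rw [tsum_mul_left]

lemma abs_integral_mul_pow_le {s : ℝ} (hs : 0 ≤ s) {K : ℝ → ℝ}
    (hK : IntervalIntegrable K volume 0 s) (n : ℕ) :
    |∫ u in 0..s, K u * u ^ n| ≤ (∫ u in 0..s, |K u|) * s ^ n := by
  rw [← intervalIntegral.integral_mul_const, ← Real.norm_eq_abs]
  refine norm_integral_le_of_norm_le hs (ae_of_all _ fun u hu => ?_) (hK.abs.mul_const _)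
  rw [Real.norm_eq_abs, abs_mul, abs_pow, abs_of_pos hu.1]
  gcongr
  exacts [hu.1.le, hu.2]

lemma integral_mul_tsum_mul_pow_mul_pow {s t v : ℝ} (hs : 0 ≤ s) (hv : |v| ≤ t)
    {K : ℝ → ℝ} (hK : IntervalIntegrable K volume 0 s) {c : ℕ × ℕ → ℝ}
    (hc : Summable fun p => |c p| * s ^ p.1 * t ^ p.2) :
    ∫ u in 0..s, K u * ∑' p, c p * u ^ p.1 * v ^ p.2
      = ∑' p, c p * (∫ u in 0..s, K u * u ^ p.1) * v ^ p.2 := by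
  rw [integral_mul_tsum_of_abs_le hs hK (fun p => by fun_prop) (fun p u hu => ?_) hc]
  · refine tsum_congr fun p => ?_
    have hcomm : ∀ u, K u * (c p * u ^ p.1 * v ^ p.2) = c p * (K u * u ^ p.1) * v ^ p.2 :=
      fun u => by ring
    simp_rw [hcomm, intervalIntegral.integral_mul_const, intervalIntegral.integral_const_mul]
  · rw [abs_mul, abs_mul, abs_pow, abs_pow, abs_of_pos hu.1]
    gcongr
    · exact hu.1.le
    · exact hu.2

theorem integral_integral_eq_tsum_of_hasSum {s t : ℝ} (hs : 0 ≤ s) (ht : 0 ≤ t)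
    {K₁ K₂ : ℝ → ℝ} (hK₁ : IntervalIntegrable K₁ volume 0 s)
    (hK₂ : IntervalIntegrable K₂ volume 0 t) {f : ℝ → ℝ → ℝ} {c : ℕ × ℕ → ℝ}
    (hf : ∀ u ∈ Set.Icc 0 s, ∀ v ∈ Set.Icc 0 t,
      HasSum (fun p => c p * u ^ p.1 * v ^ p.2) (f u v)) :
    ∫ v in 0..t, (∫ u in 0..s, K₁ u * f u v) * K₂ v
      = ∑' p, c p * (∫ u in 0..s, K₁ u * u ^ p.1) * (∫ v in 0..t, K₂ v * v ^ p.2) := by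
  -- absolute convergence at the corner `(s, t)` dominates the series on the whole rectangle
  have hc : Summable fun p => |c p| * s ^ p.1 * t ^ p.2 :=
    (hf s ⟨hs, le_rfl⟩ t ⟨ht, le_rfl⟩).summable.abs.congr fun p => by
      rw [abs_mul, abs_mul, abs_pow, abs_pow, abs_of_nonneg hs, abs_of_nonneg ht]
  set m : ℕ × ℕ → ℝ := fun p => c p * ∫ u in 0..s, K₁ u * u ^ p.1
  have hinner : ∀ v ∈ Set.uIcc 0 t,
      (∫ u in 0..s, K₁ u * f u v) * K₂ v = K₂ v * ∑' p, m p * v ^ p.2 := fun v hv => by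
    rw [Set.uIcc_of_le ht] at hv
    have hexpand :
        ∀ u ∈ Set.uIcc 0 s, K₁ u * f u v = K₁ u * ∑' p, c p * u ^ p.1 * v ^ p.2 :=
      fun u hu => by rw [(hf u (Set.uIcc_of_le hs ▸ hu) v hv).tsum_eq]
    rw [integral_congr hexpand, mul_comm,
      integral_mul_tsum_mul_pow_mul_pow hs (by rw [abs_of_nonneg hv.1]; exact hv.2) hK₁ hc]
  have hA : 0 ≤ ∫ u in 0..s, |K₁ u| :=
    intervalIntegral.integral_nonneg hs fun _ _ => abs_nonneg _
  rw [integral_congr hinner, integral_mul_tsum_of_abs_le ht hK₂ (fun p => by fun_prop)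
    (fun p v hv => ?_) (hc.mul_left (∫ u in 0..s, |K₁ u|))]
  · refine tsum_congr fun p => ?_
    simp_rw [mul_left_comm (K₂ _), intervalIntegral.integral_const_mul]
    rfl
  · rw [abs_mul, abs_mul, abs_pow, abs_of_pos hv.1]
    calc |c p| * |∫ u in 0..s, K₁ u * u ^ p.1| * v ^ p.2
        ≤ |c p| * ((∫ u in 0..s, |K₁ u|) * s ^ p.1) * t ^ p.2 :=
          mul_le_mul (mul_le_mul_of_nonneg_left (abs_integral_mul_pow_le hs hK₁ p.1)
            (abs_nonneg _)) (pow_le_pow_left₀ hv.1.le hv.2 _) (pow_nonneg hv.1.le _)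
            (mul_nonneg (abs_nonneg _) (mul_nonneg hA (pow_nonneg hs _)))
      _ = _ := by ring

lemma abs_poch_div_poch_add_le_one {x y : ℝ} (hx : 0 < x) (hy : 0 ≤ y) (n : ℕ) :
    |poch x n / poch (x + y) n| ≤ 1 := by
  rw [abs_of_pos (div_pos (poch_pos hx n) (poch_pos (by linarith) n)),
    div_le_one (poch_pos (by linarith) n)]
  exact poch_le_poch hx.le (by linarith) n

theorem summable_F2_terms (e : ℝ) {a b c d x y : ℝ} (ha : 0 < a) (hb : 0 < b) (hc : 0 ≤ c)
    (hd : 0 ≤ d) (hxy : |x| + |y| < 1) :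
    Summable fun p : ℕ × ℕ => poch e (p.1 + p.2) * poch a p.1 * poch b p.2 /
      (poch (a + c) p.1 * poch (b + d) p.2 * (p.1 ! : ℝ) * (p.2 ! : ℝ)) *
        x ^ p.1 * y ^ p.2 := by
  refine (hasSum_poch_add_div_factorial_mul_pow_mul_pow e hxy).summable.abs.of_norm_bounded
    fun p => ?_
  have hsplit : poch e (p.1 + p.2) * poch a p.1 * poch b p.2 /
      (poch (a + c) p.1 * poch (b + d) p.2 * (p.1 ! : ℝ) * (p.2 ! : ℝ)) * x ^ p.1 * y ^ p.2
      = poch e (p.1 + p.2) / (p.1 ! * p.2 !) * x ^ p.1 * y ^ p.2 *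
        (poch a p.1 / poch (a + c) p.1) * (poch b p.2 / poch (b + d) p.2) := by ring
  rw [hsplit, Real.norm_eq_abs, abs_mul, abs_mul]
  calc _ ≤ |poch e (p.1 + p.2) / (p.1 ! * p.2 !) * x ^ p.1 * y ^ p.2| * 1 * 1 := by
        gcongr
        exacts [abs_poch_div_poch_add_le_one ha hc _, abs_poch_div_poch_add_le_one hb hd _]
    _ = _ := by ring

theorem stmt9_general (a b c d e : ℝ) (ha : 0 < a) (hb : 0 < b) (hc : 0 < c) (hd : 0 < d)
    (s t : ℝ) (hs0 : 0 < s) (ht0 : 0 < t) (ht1 : t < 1 - s) :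
    Summable (fun p : ℕ × ℕ =>
        poch e (p.1 + p.2) * poch a p.1 * poch b p.2 /
          (poch (a + c) p.1 * poch (b + d) p.2 *
            (Nat.factorial p.1 : ℝ) * (Nat.factorial p.2 : ℝ)) * s ^ p.1 * t ^ p.2)
    ∧ (∫ v in (0:ℝ)..t,
          (∫ u in (0:ℝ)..s, u ^ (a - 1) * (s - u) ^ (c - 1) * (1 - u - v) ^ (-e)) *
            v ^ (b - 1) * (t - v) ^ (d - 1))
      = Beta2 a c * Beta2 b d * s ^ (a + c - 1) * t ^ (b + d - 1) *
          F2 e a b (a + c) (b + d) s t := by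
  have hst : |s| + |t| < 1 := by rw [abs_of_pos hs0, abs_of_pos ht0]; linarith
  have hF2 := summable_F2_terms e ha hb hc.le hd.le hst
  refine ⟨hF2, ?_⟩
  calc _ = ∫ v in (0:ℝ)..t,
          (∫ u in (0:ℝ)..s, u ^ (a - 1) * (s - u) ^ (c - 1) * (1 - u - v) ^ (-e)) *
            (v ^ (b - 1) * (t - v) ^ (d - 1)) := by simp only [mul_assoc]
    _ = ∑' p : ℕ × ℕ, poch e (p.1 + p.2) / (p.1 ! * p.2 !) *
          (∫ u in (0:ℝ)..s, u ^ (a - 1) * (s - u) ^ (c - 1) * u ^ p.1) *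
          (∫ v in (0:ℝ)..t, v ^ (b - 1) * (t - v) ^ (d - 1) * v ^ p.2) :=
        integral_integral_eq_tsum_of_hasSum hs0.le ht0.le
          (intervalIntegrable_rpow_mul_sub_rpow_s9 ha hc hs0)
          (intervalIntegrable_rpow_mul_sub_rpow_s9 hb hd ht0) fun u hu v hv =>
            hasSum_poch_add_div_factorial_mul_pow_mul_pow e (by
              rw [abs_of_nonneg hu.1, abs_of_nonneg hv.1]; linarith [hu.2, hv.2])
    _ = _ := by
      rw [F2, ← hF2.tsum_prod, ← tsum_mul_left]
      refine tsum_congr fun p => ?_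
      rw [integral_rpow_mul_sub_rpow_mul_pow ha hc hs0,
        integral_rpow_mul_sub_rpow_mul_pow hb hd ht0]
      ring

/-- The integral `I₁(s,t)` evaluates to
`B(a,c)B(b,d) s^{a+c-1} t^{b+d-1} F₂(e; a, b; a+c, b+d; s, t)`,
the `F₂` series converging since `s + t < 1`. -/
theorem stmt9 (a b c d e : ℝ) (ha : 0 < a) (hb : 0 < b) (hc : 0 < c) (hd : 0 < d)
    (s t : ℝ) (hs0 : 0 < s) (hs1 : s < 1) (ht0 : 0 < t) (ht1 : t < 1 - s) :
    Summable (fun p : ℕ × ℕ =>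
        poch e (p.1 + p.2) * poch a p.1 * poch b p.2 /
          (poch (a + c) p.1 * poch (b + d) p.2 *
            (Nat.factorial p.1 : ℝ) * (Nat.factorial p.2 : ℝ)) * s ^ p.1 * t ^ p.2)
    ∧ (∫ v in (0:ℝ)..t,
          (∫ u in (0:ℝ)..s, u ^ (a - 1) * (s - u) ^ (c - 1) * (1 - u - v) ^ (-e)) *
            v ^ (b - 1) * (t - v) ^ (d - 1))
      = Beta2 a c * Beta2 b d * s ^ (a + c - 1) * t ^ (b + d - 1) *
          F2 e a b (a + c) (b + d) s t :=
  stmt9_general a b c d e ha hb hc hd s t hs0 ht0 ht1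
end
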